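/- arXiv:2012.11063 — 4 statements merged into one kernel-verified Lean document; each statement's English description precedes it below -/
import Mathlib

section
/- Let x, y, z be complex numbers with |x| < 1/2, |y| < 1/4, x ≠ 0, y ≠ 0 and |z²| < |xy|. Then the series Φ(x, y, z; t) = 1 + Σ_{k,n≥1, s≥0} G(k,n,s;t) x^{k−n−s} y^{n−s} z^{2s} converges uniformly on the closed disk |t| ≤ 1/2. -/
open Complex Filter Metric Finset

attribute [local instance] Classical.propDecidable

noncomputable section

/-- Condition on the summation variables of the level-two multiple polylogarithm:
`m` is strictly increasing, `m i ≡ i+1 (mod 2)` (so `m 0` is odd, `m 1` even, ...),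
and all `m i` are positive. -/
def athCond (n : ℕ) (m : Fin n → ℕ) : Prop :=
  StrictMono m ∧ ∀ i : Fin n, m i % 2 = ((i : ℕ) + 1) % 2 ∧ 0 < m i

/-- The last entry `m n` of the summation sequence (junk value `0` for depth `0`). -/
def lastExp {n : ℕ} (m : Fin n → ℕ) : ℕ :=
  if h : 0 < n then m ⟨n - 1, Nat.sub_lt h Nat.one_pos⟩ else 0

/-- The level-two multiple polylogarithm
`Ath(𝐤; t) = Σ_{0<m₁<⋯<mₙ, mᵢ ≡ i (2)} t^{mₙ}/(m₁^{k₁}⋯mₙ^{kₙ})`, with `Ath(∅;t) = 1`. -/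
def Ath {n : ℕ} (k : Fin n → ℕ) (t : ℂ) : ℂ :=
  ∑' m : Fin n → ℕ,
    if athCond n m then t ^ lastExp m / ∏ i, ((m i : ℂ) ^ k i) else 0

/-- The multiple T-value `T(𝐤) = 2^n Σ_{0<m₁<⋯<mₙ, mᵢ ≡ i (2)} 1/(m₁^{k₁}⋯mₙ^{kₙ})`. -/
def Tval {n : ℕ} (k : Fin n → ℕ) : ℝ :=
  2 ^ n * ∑' m : Fin n → ℕ,
    if athCond n m then (∏ i, ((m i : ℝ) ^ k i))⁻¹ else 0

/-- `κ` is an index of weight `k`, depth `n` and height `s`. -/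
def IdxCond (k n s : ℕ) (κ : Fin n → ℕ) : Prop :=
  (∀ i, 1 ≤ κ i) ∧ (∑ i, κ i) = k ∧ (Finset.univ.filter fun i => 2 ≤ κ i).card = s

/-- `κ` is an admissible index of weight `k`, depth `n` and height `s`. -/
def IdxCond0 (k n s : ℕ) (κ : Fin n → ℕ) : Prop :=
  IdxCond k n s κ ∧ ∀ h : 0 < n, 2 ≤ κ ⟨n - 1, Nat.sub_lt h Nat.one_pos⟩

/-- `G(k,n,s;t) = 2^n Σ_{𝐤 ∈ I(k,n,s)} Ath(𝐤;t)`. -/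
def G (k n s : ℕ) (t : ℂ) : ℂ :=
  2 ^ n * ∑' κ : Fin n → ℕ, if IdxCond k n s κ then Ath κ t else 0

/-- `G₀(k,n,s;t) = 2^n Σ_{𝐤 ∈ I₀(k,n,s)} Ath(𝐤;t)`. -/
def G0 (k n s : ℕ) (t : ℂ) : ℂ :=
  2 ^ n * ∑' κ : Fin n → ℕ, if IdxCond0 k n s κ then Ath κ t else 0

/-- `Σ_{𝐤 ∈ I₀(k,n,s)} T(𝐤)`. -/
def sumT0 (k n s : ℕ) : ℝ :=
  ∑' κ : Fin n → ℕ, if IdxCond0 k n s κ then Tval κ else 0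

/-- One term of the generating function `Φ`. -/
def PhiTerm (x y z : ℂ) (p : ℕ × ℕ × ℕ) (t : ℂ) : ℂ :=
  if 1 ≤ p.1 ∧ 1 ≤ p.2.1 then
    G p.1 p.2.1 p.2.2 t * x ^ (p.1 - p.2.1 - p.2.2) * y ^ (p.2.1 - p.2.2) * z ^ (2 * p.2.2)
  else 0

/-- `Φ(x,y,z;t) = 1 + Σ_{k,n≥1, s≥0} G(k,n,s;t) x^{k−n−s} y^{n−s} z^{2s}`. -/
def Phi (x y z t : ℂ) : ℂ := 1 + ∑' p : ℕ × ℕ × ℕ, PhiTerm x y z p t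

/-- One term of the generating function `Φ₀`. -/
def Phi0Term (x y z : ℂ) (p : ℕ × ℕ × ℕ) (t : ℂ) : ℂ :=
  if 1 ≤ p.1 ∧ 1 ≤ p.2.1 ∧ 1 ≤ p.2.2 then
    G0 p.1 p.2.1 p.2.2 t * x ^ (p.1 - p.2.1 - p.2.2) * y ^ (p.2.1 - p.2.2)
      * z ^ (2 * (p.2.2 - 1))
  else 0

/-- `Φ₀(x,y,z;t) = Σ_{k,n,s≥1} G₀(k,n,s;t) x^{k−n−s} y^{n−s} z^{2(s−1)}`. -/
def Phi0 (x y z t : ℂ) : ℂ := ∑' p : ℕ × ℕ × ℕ, Phi0Term x y z p t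

/-- The shifted factorial `(a)ₙ = a(a+1)⋯(a+n−1)`. -/
def poch (a : ℂ) (n : ℕ) : ℂ := ∏ j ∈ Finset.range n, (a + j)

/-- The Gauss hypergeometric series `F(a,b,c;t)`. -/
def hypF (a b c t : ℂ) : ℂ :=
  ∑' n : ℕ, poch a n * poch b n / ((n.factorial : ℂ) * poch c n) * t ^ n

section Aux

open scoped ENNReal NNReal

/-- Geometric tail sum in `ℝ≥0∞`. -/
lemma tsum_geom_shift (a : ℕ) :
    ∑' b : ℕ, (if a < b then ((2 : ℝ≥0∞))⁻¹ ^ (b - a) else 0) = 1 := by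
  have hinj : Function.Injective (fun e : ℕ => a + 1 + e) := by
    intro e1 e2 h
    simp only at h
    omega
  have hsupp : Function.support
      (fun b : ℕ => (if a < b then ((2 : ℝ≥0∞))⁻¹ ^ (b - a) else 0)) ⊆
      Set.range (fun e : ℕ => a + 1 + e) := by
    intro b hb
    by_cases h : a < b
    · exact ⟨b - a - 1, by simp only; omega⟩
    · simp [h] at hb
  rw [← Function.Injective.tsum_eq hinj hsupp]
  have heq : ∀ e : ℕ, (if a < a + 1 + e then ((2 : ℝ≥0∞))⁻¹ ^ (a + 1 + e - a) else 0)
      = 2⁻¹ * 2⁻¹ ^ e := by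
    intro e
    rw [if_pos (by omega), show a + 1 + e - a = e + 1 from by omega, pow_succ]
    ring
  rw [tsum_congr heq, ENNReal.tsum_mul_left, ENNReal.tsum_geometric,
    ENNReal.one_sub_inv_two, inv_inv]
  exact ENNReal.inv_mul_cancel two_ne_zero ENNReal.ofNat_ne_top

lemma cons_cond_iff {n : ℕ} (b a : ℕ) (rest : Fin n → ℕ) :
    (StrictMono (Fin.cons (α := fun _ => ℕ) b rest) ∧
        ∀ i, a < Fin.cons (α := fun _ => ℕ) b rest i) ↔
      (a < b ∧ (StrictMono rest ∧ ∀ j, b < rest j)) := by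
  constructor
  · rintro ⟨hm, hlt⟩
    refine ⟨by simpa using hlt 0, fun i j hij => ?_, fun j => ?_⟩
    · have := hm (show Fin.succ i < Fin.succ j from Fin.succ_lt_succ_iff.mpr hij)
      simpa using this
    · have := hm (show (0 : Fin (n + 1)) < j.succ from j.succ_pos)
      simpa using this
  · rintro ⟨hab, hr, hbr⟩
    constructor
    · intro i j hij
      induction i using Fin.cases with
      | zero =>
        induction j using Fin.cases with
        | zero => exact absurd hij (lt_irrefl _)
        | succ j' => simpa using hbr j'
      | succ i' =>
        induction j using Fin.cases with
        | zero => exact absurd hij (by simp [Fin.lt_def])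
        | succ j' =>
          have : i' < j' := Fin.succ_lt_succ_iff.mp hij
          simpa using hr this
    · intro i
      induction i using Fin.cases with
      | zero => simpa using hab
      | succ i' => simpa using hab.trans (hbr i')

/-- Key estimate: restricted to strictly increasing sequences above `a`,
the sum of `(1/2)^(last - a)` is at most 1. -/
lemma tsum_mono_cond_bound : ∀ (n : ℕ) (a : ℕ),
    ∑' m : Fin n → ℕ,
      (if StrictMono m ∧ ∀ i, a < m i then ((2 : ℝ≥0∞))⁻¹ ^ (lastExp m - a) else 0) ≤ 1 := by
  intro n
  induction n with
  | zero =>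
    intro a
    have hall : ∀ m : Fin 0 → ℕ,
        (if StrictMono m ∧ ∀ i, a < m i then ((2 : ℝ≥0∞))⁻¹ ^ (lastExp m - a) else 0) = 1 := by
      intro m
      rw [if_pos ⟨fun i _ _ => i.elim0, fun i => i.elim0⟩]
      simp [lastExp]
    rw [tsum_congr hall, tsum_fintype]
    simp
  | succ n ih =>
    intro a
    rw [← (Fin.consEquiv (fun _ => ℕ)).tsum_eq, ENNReal.tsum_prod']
    simp only [show ∀ (p : ℕ × _), (Fin.consEquiv (fun _ => ℕ)) p = Fin.cons p.1 p.2
      from fun _ => rfl]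
    cases n with
    | zero =>
      have heq : ∀ (b : ℕ) (rest : Fin 0 → ℕ),
          (if StrictMono (Fin.cons (α := fun _ => ℕ) b rest) ∧
              ∀ i, a < Fin.cons (α := fun _ => ℕ) b rest i
            then ((2 : ℝ≥0∞))⁻¹ ^ (lastExp (Fin.cons (α := fun _ => ℕ) b rest) - a) else 0)
          = (if a < b then ((2 : ℝ≥0∞))⁻¹ ^ (b - a) else 0) := by
        intro b rest
        have h1 : lastExp (Fin.cons (α := fun _ => ℕ) b rest) = b := by
          simp [lastExp]
        have h2 : (StrictMono (Fin.cons (α := fun _ => ℕ) b rest) ∧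
            ∀ i, a < Fin.cons (α := fun _ => ℕ) b rest i) ↔ a < b := by
          rw [cons_cond_iff]
          constructor
          · exact fun h => h.1
          · exact fun h => ⟨h, ⟨fun i _ _ => i.elim0, fun j => j.elim0⟩⟩
        rw [h1]
        by_cases h : a < b
        · rw [if_pos (h2.mpr h), if_pos h]
        · rw [if_neg (fun hc => h (h2.mp hc)), if_neg h]
      calc _ = ∑' (b : ℕ), (if a < b then ((2 : ℝ≥0∞))⁻¹ ^ (b - a) else 0) := by
            apply tsum_congr; intro b
            rw [tsum_fintype, Finset.univ_unique, Finset.sum_singleton, heq]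
        _ ≤ 1 := le_of_eq (tsum_geom_shift a)
    | succ n' =>
      have heq : ∀ (b : ℕ) (rest : Fin (n' + 1) → ℕ),
          (if StrictMono (Fin.cons (α := fun _ => ℕ) b rest) ∧
              ∀ i, a < Fin.cons (α := fun _ => ℕ) b rest i
            then ((2 : ℝ≥0∞))⁻¹ ^ (lastExp (Fin.cons (α := fun _ => ℕ) b rest) - a) else 0)
          = (if a < b then ((2 : ℝ≥0∞))⁻¹ ^ (b - a) else 0) *
            (if StrictMono rest ∧ ∀ j, b < rest j
              then ((2 : ℝ≥0∞))⁻¹ ^ (lastExp rest - b) else 0) := by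
        intro b rest
        have hlast : lastExp (Fin.cons (α := fun _ => ℕ) b rest) = lastExp rest := by
          simp only [lastExp, dif_pos (Nat.succ_pos _)]
          have hmk : (⟨n' + 1 + 1 - 1, by omega⟩ : Fin (n' + 1 + 1)) =
              Fin.succ ⟨n' + 1 - 1, by omega⟩ := by
            simp [Fin.succ_mk]
          rw [hmk, Fin.cons_succ]
        by_cases hcond : StrictMono (Fin.cons (α := fun _ => ℕ) b rest) ∧
            ∀ i, a < Fin.cons (α := fun _ => ℕ) b rest i
        · obtain ⟨hab, hr, hbr⟩ := (cons_cond_iff b a rest).mp hcond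
          rw [if_pos hcond, if_pos hab, if_pos ⟨hr, hbr⟩, hlast, ← pow_add]
          congr 1
          have hblast : b < lastExp rest := by
            simp only [lastExp, dif_pos (Nat.succ_pos _)]
            exact hbr _
          omega
        · rw [if_neg hcond]
          by_cases hab : a < b
          · by_cases hrest : StrictMono rest ∧ ∀ j, b < rest j
            · exact absurd ((cons_cond_iff b a rest).mpr ⟨hab, hrest⟩) hcond
            · rw [if_neg hrest, mul_zero]
          · rw [if_neg hab, zero_mul]
      calc _ ≤ ∑' (b : ℕ), (if a < b then ((2 : ℝ≥0∞))⁻¹ ^ (b - a) else 0) * 1 := by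
            apply ENNReal.tsum_le_tsum
            intro b
            rw [tsum_congr (heq b), ENNReal.tsum_mul_left]
            exact mul_le_mul_right (ih b) _
        _ = 1 := by simp only [mul_one]; exact tsum_geom_shift a

/-- Sum over all tuples with entries `≥ 1` of `∏ (1/2)^(κ i)` is at most 1. -/
lemma tsum_idx_bound : ∀ n : ℕ,
    ∑' κ : Fin n → ℕ,
      (if ∀ i, 1 ≤ κ i then ∏ i, ((2 : ℝ≥0∞))⁻¹ ^ (κ i) else 0) ≤ 1 := by
  intro n
  induction n with
  | zero =>
    have hall : ∀ κ : Fin 0 → ℕ,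
        (if ∀ i, 1 ≤ κ i then ∏ i, ((2 : ℝ≥0∞))⁻¹ ^ (κ i) else 0) = 1 := by
      intro κ
      rw [if_pos (fun i => i.elim0)]
      simp
    rw [tsum_congr hall, tsum_fintype]
    simp
  | succ n ih =>
    rw [← (Fin.consEquiv (fun _ => ℕ)).tsum_eq, ENNReal.tsum_prod']
    simp only [show ∀ (p : ℕ × _), (Fin.consEquiv (fun _ => ℕ)) p = Fin.cons p.1 p.2
      from fun _ => rfl]
    have heq : ∀ (b : ℕ) (rest : Fin n → ℕ),
        (if ∀ i, 1 ≤ Fin.cons (α := fun _ => ℕ) b rest i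
          then ∏ i, ((2 : ℝ≥0∞))⁻¹ ^ (Fin.cons (α := fun _ => ℕ) b rest i) else 0)
        = (if 0 < b then ((2 : ℝ≥0∞))⁻¹ ^ (b - 0) else 0) *
          (if ∀ j, 1 ≤ rest j then ∏ j, ((2 : ℝ≥0∞))⁻¹ ^ (rest j) else 0) := by
      intro b rest
      have hc : (∀ i, 1 ≤ Fin.cons (α := fun _ => ℕ) b rest i) ↔
          (0 < b ∧ ∀ j, 1 ≤ rest j) := by
        rw [Fin.forall_fin_succ]
        simp [Nat.lt_iff_add_one_le]
      have hp : ∏ i, ((2 : ℝ≥0∞))⁻¹ ^ (Fin.cons (α := fun _ => ℕ) b rest i)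
          = ((2 : ℝ≥0∞))⁻¹ ^ (b - 0) * ∏ j, ((2 : ℝ≥0∞))⁻¹ ^ (rest j) := by
        rw [Fin.prod_univ_succ]
        simp
      by_cases h1 : 0 < b <;> by_cases h2 : ∀ j, 1 ≤ rest j <;>
        simp [hc, h1, h2, hp]
    calc _ ≤ ∑' (b : ℕ), (if 0 < b then ((2 : ℝ≥0∞))⁻¹ ^ (b - 0) else 0) * 1 := by
          apply ENNReal.tsum_le_tsum
          intro b
          rw [tsum_congr (heq b), ENNReal.tsum_mul_left]
          exact mul_le_mul_right ih _
      _ = 1 := by simp only [mul_one]; exact tsum_geom_shift 0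

/-- From an `ℝ≥0∞` bound on the sum of norms, get summability and a norm bound. -/
lemma summable_and_norm_tsum_le {α : Type*} (f : α → ℂ) (C : ℝ≥0)
    (h : ∑' a, (‖f a‖₊ : ℝ≥0∞) ≤ C) : Summable f ∧ ‖∑' a, f a‖ ≤ C := by
  have hne : ∑' a, (‖f a‖₊ : ℝ≥0∞) ≠ ⊤ := (h.trans_lt ENNReal.coe_lt_top).ne
  have hsnn : Summable (fun a => ‖f a‖₊) := ENNReal.tsum_coe_ne_top_iff_summable.mp hne
  have hs : Summable f := Summable.of_nnnorm hsnn
  refine ⟨hs, ?_⟩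
  have hnorm : Summable (fun a => ‖f a‖) := by
    simpa using NNReal.summable_coe.mpr hsnn
  have h1 : ‖∑' a, f a‖ ≤ ∑' a, ‖f a‖ := norm_tsum_le_tsum_norm hnorm
  have h2 : (∑' a, ‖f a‖₊) ≤ C := by
    have hc := ENNReal.coe_tsum hsnn
    rw [← hc] at h
    exact_mod_cast h
  have h3 : ∑' a, ‖f a‖ = ((∑' a, ‖f a‖₊ : ℝ≥0) : ℝ) := by
    rw [NNReal.coe_tsum]
    simp
  rw [h3] at h1
  exact h1.trans (by exact_mod_cast h2)

lemma Ath_norm_le {n : ℕ} (k : Fin n → ℕ) {t : ℂ} (ht : ‖t‖ ≤ 1 / 2) : ‖Ath k t‖ ≤ 1 := by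
  have key : ∀ m : Fin n → ℕ,
      (‖(if athCond n m then t ^ lastExp m / ∏ i, ((m i : ℂ) ^ k i) else 0)‖₊ : ℝ≥0∞)
      ≤ (if StrictMono m ∧ ∀ i, 0 < m i then ((2 : ℝ≥0∞))⁻¹ ^ (lastExp m - 0) else 0) := by
    intro m
    by_cases h : athCond n m
    · rw [if_pos h, if_pos ⟨h.1, fun i => (h.2 i).2⟩]
      have hreal : ‖t ^ lastExp m / ∏ i, ((m i : ℂ) ^ k i)‖ ≤ (1 / 2 : ℝ) ^ lastExp m := by
        rw [norm_div]
        have h1 : ‖t ^ lastExp m‖ ≤ (1 / 2 : ℝ) ^ lastExp m := by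
          rw [norm_pow]
          exact pow_le_pow_left₀ (norm_nonneg t) ht _
        have h2 : (1 : ℝ) ≤ ‖∏ i, ((m i : ℂ) ^ k i)‖ := by
          rw [norm_prod]
          calc (1 : ℝ) = ∏ _i : Fin n, 1 := by rw [Finset.prod_const_one]
            _ ≤ ∏ i, ‖((m i : ℂ)) ^ k i‖ := by
                apply Finset.prod_le_prod (fun i _ => zero_le_one)
                intro i _
                rw [norm_pow]
                have hmi : (1 : ℝ) ≤ ‖((m i : ℕ) : ℂ)‖ := by
                  rw [Complex.norm_natCast]
                  exact_mod_cast (h.2 i).2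
                exact one_le_pow₀ hmi
        calc ‖t ^ lastExp m‖ / ‖∏ i, ((m i : ℂ) ^ k i)‖
            ≤ ‖t ^ lastExp m‖ := div_le_self (norm_nonneg _) h2
          _ ≤ (1 / 2 : ℝ) ^ lastExp m := h1
      rw [Nat.sub_zero]
      calc (‖t ^ lastExp m / ∏ i, ((m i : ℂ) ^ k i)‖₊ : ℝ≥0∞)
          ≤ ((((2 : ℝ≥0))⁻¹ ^ lastExp m : ℝ≥0) : ℝ≥0∞) := by
            apply ENNReal.coe_le_coe.mpr
            rw [← NNReal.coe_le_coe]
            push_cast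
            simpa [one_div] using hreal
        _ = ((2 : ℝ≥0∞))⁻¹ ^ lastExp m := by
            rw [ENNReal.coe_pow, ENNReal.coe_inv (by norm_num)]
            norm_num
    · rw [if_neg h]
      simp
  have hts : ∑' m, (‖(if athCond n m then t ^ lastExp m / ∏ i, ((m i : ℂ) ^ k i)
      else 0)‖₊ : ℝ≥0∞) ≤ 1 :=
    (ENNReal.tsum_le_tsum key).trans (tsum_mono_cond_bound n 0)
  obtain ⟨_, hb⟩ := summable_and_norm_tsum_le _ 1 (by simpa using hts)
  unfold Ath
  simpa using hb

end Aux

section Aux2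

open scoped ENNReal NNReal

lemma IdxCond_constraints {k n s : ℕ} {κ : Fin n → ℕ} (h : IdxCond k n s κ) :
    n + s ≤ k ∧ s ≤ n := by
  obtain ⟨h1, h2, h3⟩ := h
  have hcard : (Finset.univ.filter fun i : Fin n => 2 ≤ κ i).card ≤ n := by
    simpa using Finset.card_filter_le Finset.univ (fun i : Fin n => 2 ≤ κ i)
  constructor
  · have hsplit : ∑ i ∈ Finset.univ.filter (fun i : Fin n => 2 ≤ κ i), κ i
        + ∑ i ∈ Finset.univ.filter (fun i : Fin n => ¬ 2 ≤ κ i), κ i = k := by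
      rw [Finset.sum_filter_add_sum_filter_not, h2]
    have hcards : (Finset.univ.filter fun i : Fin n => 2 ≤ κ i).card
        + (Finset.univ.filter fun i : Fin n => ¬ 2 ≤ κ i).card = n := by
      simpa using Finset.card_filter_add_card_filter_not
        (s := (Finset.univ : Finset (Fin n))) (p := fun i => 2 ≤ κ i)
    have hbig : 2 * s ≤ ∑ i ∈ Finset.univ.filter (fun i : Fin n => 2 ≤ κ i), κ i := by
      rw [← h3]
      calc 2 * (Finset.univ.filter fun i : Fin n => 2 ≤ κ i).card
          = ∑ _i ∈ Finset.univ.filter (fun i : Fin n => 2 ≤ κ i), 2 := by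
            rw [Finset.sum_const, smul_eq_mul, mul_comm]
        _ ≤ ∑ i ∈ Finset.univ.filter (fun i : Fin n => 2 ≤ κ i), κ i :=
            Finset.sum_le_sum (fun i hi => (Finset.mem_filter.mp hi).2)
    have hsmall : (Finset.univ.filter fun i : Fin n => ¬ 2 ≤ κ i).card
        ≤ ∑ i ∈ Finset.univ.filter (fun i : Fin n => ¬ 2 ≤ κ i), κ i := by
      calc (Finset.univ.filter fun i : Fin n => ¬ 2 ≤ κ i).card
          = ∑ _i ∈ Finset.univ.filter (fun i : Fin n => ¬ 2 ≤ κ i), 1 := by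
            rw [Finset.sum_const, smul_eq_mul, mul_one]
        _ ≤ ∑ i ∈ Finset.univ.filter (fun i : Fin n => ¬ 2 ≤ κ i), κ i :=
            Finset.sum_le_sum (fun i _ => h1 i)
    omega
  · rw [← h3]; exact hcard

lemma G_eq_zero {k n s : ℕ} (t : ℂ) (h : ¬ (n + s ≤ k ∧ s ≤ n)) : G k n s t = 0 := by
  unfold G
  have hz : ∀ κ : Fin n → ℕ, (if IdxCond k n s κ then Ath κ t else 0) = 0 := by
    intro κ
    rw [if_neg]
    intro hc
    exact h (IdxCond_constraints hc)
  rw [tsum_congr hz]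
  simp

lemma G_norm_le (k n s : ℕ) {t : ℂ} (ht : ‖t‖ ≤ 1 / 2) :
    ‖G k n s t‖ ≤ 2 ^ n * 2 ^ k := by
  have key : ∀ κ : Fin n → ℕ,
      (‖(if IdxCond k n s κ then Ath κ t else 0)‖₊ : ℝ≥0∞)
      ≤ (2 : ℝ≥0∞) ^ k * (if ∀ i, 1 ≤ κ i then ∏ i, ((2 : ℝ≥0∞))⁻¹ ^ (κ i) else 0) := by
    intro κ
    by_cases h : IdxCond k n s κ
    · rw [if_pos h, if_pos h.1]
      have hprod : ∏ i, ((2 : ℝ≥0∞))⁻¹ ^ (κ i) = ((2 : ℝ≥0∞))⁻¹ ^ k := by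
        rw [Finset.prod_pow_eq_pow_sum, h.2.1]
      rw [hprod, ← mul_pow, ENNReal.mul_inv_cancel two_ne_zero ENNReal.ofNat_ne_top, one_pow]
      have hA : ‖Ath κ t‖₊ ≤ 1 := by
        rw [← NNReal.coe_le_coe]
        simpa using Ath_norm_le κ ht
      exact_mod_cast hA
    · rw [if_neg h]
      simp
  have hts : ∑' κ : Fin n → ℕ, (‖(if IdxCond k n s κ then Ath κ t else 0)‖₊ : ℝ≥0∞)
      ≤ ((2 : ℝ≥0) ^ k : ℝ≥0) := by
    calc ∑' κ : Fin n → ℕ, (‖(if IdxCond k n s κ then Ath κ t else 0)‖₊ : ℝ≥0∞)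
        ≤ ∑' κ : Fin n → ℕ, (2 : ℝ≥0∞) ^ k *
            (if ∀ i, 1 ≤ κ i then ∏ i, ((2 : ℝ≥0∞))⁻¹ ^ (κ i) else 0) :=
          ENNReal.tsum_le_tsum key
      _ = (2 : ℝ≥0∞) ^ k * ∑' κ : Fin n → ℕ,
            (if ∀ i, 1 ≤ κ i then ∏ i, ((2 : ℝ≥0∞))⁻¹ ^ (κ i) else 0) :=
          ENNReal.tsum_mul_left
      _ ≤ (2 : ℝ≥0∞) ^ k * 1 := mul_le_mul_right (tsum_idx_bound n) _
      _ = ((2 : ℝ≥0) ^ k : ℝ≥0) := by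
          rw [mul_one]
          push_cast
          rfl
  obtain ⟨_, hb⟩ := summable_and_norm_tsum_le _ ((2 : ℝ≥0) ^ k) hts
  unfold G
  rw [norm_mul, norm_pow]
  have h2 : ‖(2 : ℂ)‖ = 2 := by simp
  rw [h2]
  have hb' : ‖∑' κ : Fin n → ℕ, (if IdxCond k n s κ then Ath κ t else 0)‖ ≤ 2 ^ k := by
    simpa using hb
  calc (2 : ℝ) ^ n * ‖∑' κ : Fin n → ℕ, (if IdxCond k n s κ then Ath κ t else 0)‖
      ≤ 2 ^ n * 2 ^ k := by
        apply mul_le_mul_of_nonneg_left hb' (by positivity)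

end Aux2


lemma pow_count_eq (j m s : ℕ) : (2 : ℝ) ^ (m + s) * 2 ^ (j + m + 2 * s)
    = 2 ^ j * (4 ^ m * 8 ^ s) := by
  rw [show (4 : ℝ) = 2 ^ 2 by norm_num, show (8 : ℝ) = 2 ^ 3 by norm_num,
    ← pow_mul, ← pow_mul, ← pow_add, ← pow_add, ← pow_add]
  congr 1
  ring


set_option maxHeartbeats 2000000 in
/-- The series defining `Φ(x,y,z;t)` converges uniformly on the closed disk `|t| ≤ 1/2`. -/
theorem Phi_unif_conv (x y z : ℂ) (hx : ‖x‖ < 1 / 2) (hy : ‖y‖ < 1 / 4)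
    (hx0 : x ≠ 0) (hy0 : y ≠ 0) (hz : ‖z ^ 2‖ < ‖x * y‖) :
    TendstoUniformlyOn
      (fun (S : Finset (ℕ × ℕ × ℕ)) (t : ℂ) => 1 + ∑ p ∈ S, PhiTerm x y z p t)
      (fun t => Phi x y z t) atTop {t : ℂ | ‖t‖ ≤ 1 / 2} := by

  set a : ℝ := 2 * ‖x‖ with ha_def
  set b : ℝ := 4 * ‖y‖ with hb_def
  set c : ℝ := 8 * ‖z‖ ^ 2 with hc_def
  have ha0 : 0 ≤ a := by positivity
  have hb0 : 0 ≤ b := by positivity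
  have hc0 : 0 ≤ c := by positivity
  have ha1 : a < 1 := by rw [ha_def]; linarith
  have hb1 : b < 1 := by rw [hb_def]; linarith
  have hc1 : c < 1 := by
    rw [hc_def]
    have h1 : ‖z‖ ^ 2 < ‖x‖ * ‖y‖ := by
      calc ‖z‖ ^ 2 = ‖z ^ 2‖ := by rw [norm_pow]
        _ < ‖x * y‖ := hz
        _ = ‖x‖ * ‖y‖ := norm_mul x y
    have hy0' : (0 : ℝ) < ‖y‖ := norm_pos_iff.mpr hy0
    nlinarith
  -- the majorant
  set u : ℕ × ℕ × ℕ → ℝ := fun p =>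
    if 1 ≤ p.1 ∧ 1 ≤ p.2.1 ∧ p.2.1 + p.2.2 ≤ p.1 ∧ p.2.2 ≤ p.2.1 then
      a ^ (p.1 - p.2.1 - p.2.2) * (b ^ (p.2.1 - p.2.2) * c ^ p.2.2)
    else 0 with hu_def
  have hu_nonneg : ∀ p, 0 ≤ u p := by
    intro p
    rw [hu_def]
    dsimp only
    split
    · positivity
    · exact le_refl 0
  -- summability of the majorant
  have hgeom : Summable (fun p : ℕ × ℕ × ℕ => a ^ p.1 * (b ^ p.2.1 * c ^ p.2.2)) :=
    Summable.mul_of_nonneg (summable_geometric_of_lt_one ha0 ha1)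
      (Summable.mul_of_nonneg (summable_geometric_of_lt_one hb0 hb1)
        (summable_geometric_of_lt_one hc0 hc1)
        (fun n => pow_nonneg hb0 n) (fun n => pow_nonneg hc0 n))
      (fun n => pow_nonneg ha0 n)
      (fun p => mul_nonneg (pow_nonneg hb0 _) (pow_nonneg hc0 _))
  have hinj : Function.Injective
      (fun q : ℕ × ℕ × ℕ => ((q.1 + q.2.1 + 2 * q.2.2, q.2.1 + q.2.2, q.2.2) : ℕ × ℕ × ℕ)) := by
    rintro ⟨j, m, s⟩ ⟨j', m', s'⟩ h
    simp only [Prod.mk.injEq] at h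
    obtain ⟨h1, h2, h3⟩ := h
    refine Prod.ext ?_ (Prod.ext ?_ ?_) <;> simp <;> omega
  have hu : Summable u := by
    rw [← Function.Injective.summable_iff hinj ?_]
    · apply Summable.of_nonneg_of_le (fun q => hu_nonneg _) ?_ hgeom
      rintro ⟨j, m, s⟩
      rw [hu_def]
      dsimp only [Function.comp]
      split
      · have e1 : j + m + 2 * s - (m + s) - s = j := by omega
        have e2 : m + s - s = m := by omega
        rw [e1, e2]
      · positivity
    · rintro ⟨k, n, s⟩ hq
      by_cases hcond : 1 ≤ k ∧ 1 ≤ n ∧ n + s ≤ k ∧ s ≤ n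
      · refine absurd ⟨(k - n - s, n - s, s), ?_⟩ hq
        show ((k - n - s) + (n - s) + 2 * s, (n - s) + s, s) = (k, n, s)
        obtain ⟨h1, h2, h3, h4⟩ := hcond
        have e1 : (k - n - s) + (n - s) + 2 * s = k := by omega
        have e2 : (n - s) + s = n := by omega
        rw [e1, e2]
      · rw [hu_def]
        exact if_neg hcond
  -- pointwise bound
  have hbound : ∀ (p : ℕ × ℕ × ℕ) (t : ℂ), t ∈ {t : ℂ | ‖t‖ ≤ 1 / 2} →
      ‖PhiTerm x y z p t‖ ≤ u p := by
    rintro ⟨k, n, s⟩ t ht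
    simp only [Set.mem_setOf_eq] at ht
    by_cases h1 : 1 ≤ k ∧ 1 ≤ n
    · by_cases h2 : n + s ≤ k ∧ s ≤ n
      · have hucond : 1 ≤ k ∧ 1 ≤ n ∧ n + s ≤ k ∧ s ≤ n := ⟨h1.1, h1.2, h2⟩
        rw [hu_def]
        dsimp only
        rw [if_pos hucond]
        unfold PhiTerm
        rw [if_pos h1]
        obtain ⟨j, hj⟩ : ∃ j, k = j + (n - s) + 2 * s ∧ k - n - s = j := ⟨k - n - s, by omega⟩
        set m := n - s with hm_def
        have hn : n = m + s := by omega
        have hnorm : ‖G k n s t * x ^ (k - n - s) * y ^ (n - s) * z ^ (2 * s)‖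
            = ‖G k n s t‖ * (‖x‖ ^ j * (‖y‖ ^ m * (‖z‖ ^ 2) ^ s)) := by
          rw [norm_mul, norm_mul, norm_mul, norm_pow, norm_pow, norm_pow, hj.2, ← hm_def,
            pow_mul]
          ring
        rw [hnorm]
        have hG : ‖G k n s t‖ ≤ 2 ^ n * 2 ^ k := G_norm_le k n s ht
        calc ‖G k n s t‖ * (‖x‖ ^ j * (‖y‖ ^ m * (‖z‖ ^ 2) ^ s))
            ≤ (2 ^ n * 2 ^ k) * (‖x‖ ^ j * (‖y‖ ^ m * (‖z‖ ^ 2) ^ s)) := by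
              apply mul_le_mul_of_nonneg_right hG (by positivity)
          _ = a ^ j * (b ^ m * c ^ s) := by
              rw [ha_def, hb_def, hc_def, mul_pow, mul_pow, mul_pow, hn, hj.1,
                show j + (n - s) + 2 * s = j + m + 2 * s from by rw [hm_def],
                pow_count_eq j m s]
              ring
          _ = a ^ (k - n - s) * (b ^ (n - s) * c ^ s) := by rw [hj.2, hm_def]
      · unfold PhiTerm
        rw [if_pos h1, G_eq_zero t h2]
        simpa using hu_nonneg (k, n, s)
    · unfold PhiTerm
      rw [if_neg h1]
      simpa using hu_nonneg (k, n, s)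
  have htu := tendstoUniformlyOn_tsum hu hbound
  -- add the constant 1
  rw [Metric.tendstoUniformlyOn_iff] at htu ⊢
  intro ε hε
  filter_upwards [htu ε hε] with S hS t ht
  have := hS t ht
  calc dist (Phi x y z t) (1 + ∑ p ∈ S, PhiTerm x y z p t)
      = dist (1 + ∑' p : ℕ × ℕ × ℕ, PhiTerm x y z p t) (1 + ∑ p ∈ S, PhiTerm x y z p t) := by
        rw [Phi]
    _ = dist (∑' p : ℕ × ℕ × ℕ, PhiTerm x y z p t) (∑ p ∈ S, PhiTerm x y z p t) :=
        dist_add_left 1 _ _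
    _ < ε := this

end
end

section
/- Let x, y, z be complex numbers with |x| < 1/2, |y| < 1/4, x ≠ 0, y ≠ 0 and |z²| < |xy|. Then the series Φ₀(x, y, z; t) = Σ_{k,n,s≥1} G₀(k,n,s;t) x^{k−n−s} y^{n−s} z^{2(s−1)} converges uniformly on the closed disk |t| ≤ 1. -/
open Complex Filter Metric Finset

attribute [local instance] Classical.propDecidable

noncomputable section

/-!
Weierstrass M-test, with the majorant computed in `ℝ≥0∞` so that no summability side conditions
arise. For `‖t‖ ≤ 1`, `‖Ath(𝐤; t)‖ ≤ Σ_m ∏ mᵢ^{-kᵢ}`. Since `‖z‖² ≤ ‖x‖‖y‖` and `n + s ≤ k`, the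
term of weight `k`, depth `n` and height `s` is at most `‖x‖^{k-n-1} ‖y‖^{n-1}` times that sum;
summing the geometric series in each `kᵢ` (`‖x‖ ≤ 1/2`) bounds the total over all indices of
depth `n` by `4ⁿ ‖x‖⁻¹ ‖y‖^{n-1} ζ(1, …, 1, 2)`. Splitting off `mₙ = L`,
`ζ(1, …, 1, 2) = Σ_L L⁻² e_{n-1}(1, 1/2, …, 1/(L-1))` with `e_{n-1}(…) ≤ H_{L-1}^{n-1} / (n-1)!`,
so summing over `n` first gives at most `4 ‖x‖⁻¹ Σ_L L⁻² exp(4‖y‖ H_{L-1})`, and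
`exp(4‖y‖ H_{L-1}) ≤ e^{4‖y‖} L^{4‖y‖}` makes this finite because `4‖y‖ < 1`.
-/

open scoped ENNReal

lemma Fin.strictMono_snoc_iff {α : Type*} [Preorder α] {n : ℕ} {f : Fin n → α} {a : α} :
    StrictMono (Fin.snoc f a : Fin (n + 1) → α) ↔ StrictMono f ∧ ∀ i, f i < a := by
  rw [← Fin.insertNth_last', Fin.strictMono_insertNth_iff]
  simp [Fin.castSucc_lt_last, (Fin.castSucc_lt_last _).not_ge]

namespace ENNReal

theorem tsum_fin_snoc {β : Type*} {n : ℕ} (f : (Fin (n + 1) → β) → ℝ≥0∞) :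
    ∑' m, f m = ∑' (a : β) (m : Fin n → β), f (Fin.snoc m a) := by
  rw [← (Fin.snocEquiv fun _ => β).tsum_eq, ENNReal.tsum_prod']
  rfl

theorem tsum_fin_pi_prod {β : Type*} : ∀ {n : ℕ} (f : Fin n → β → ℝ≥0∞),
    ∑' κ : Fin n → β, ∏ i, f i (κ i) = ∏ i, ∑' c, f i c
  | 0, f => by simp
  | n + 1, f => by
    rw [tsum_fin_snoc, Fin.prod_univ_castSucc, ← tsum_fin_pi_prod fun i => f i.castSucc,
      ← ENNReal.tsum_mul_left]
    refine tsum_congr fun a => ?_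
    rw [← ENNReal.tsum_mul_right]
    simp [Fin.prod_univ_castSucc]

theorem tsum_ite_le_pow_mul_pow_le {X r : ℝ≥0∞} (hX : X ≤ 1 / 2) (hr : r ≤ 1) {j : ℕ}
    (hj : 1 ≤ j) : ∑' c : ℕ, (if j ≤ c then X ^ (c - 1) * r ^ c else 0) ≤ 2 * r ^ j := by
  set g : ℕ → ℝ≥0∞ := fun c => if j ≤ c then X ^ (c - 1) * r ^ c else 0
  have hsplit := (ENNReal.summable (f := fun c => g (c + j))).sum_add_tsum_nat_add'
  rw [Finset.sum_eq_zero fun c hc => if_neg (by simpa using hc), zero_add] at hsplit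
  have hshift : ∀ c : ℕ, g (c + j) = X ^ (j - 1) * r ^ j * (X * r) ^ c := fun c => by
    simp only [g, if_pos (Nat.le_add_left j c), show c + j - 1 = c + (j - 1) by omega, pow_add,
      mul_pow]
    ring
  have hXr : X * r ≤ 1 / 2 := by simpa using mul_le_mul' hX hr
  have hgeom : (1 - X * r)⁻¹ ≤ 2 := by
    have h : 1 / 2 ≤ 1 - X * r := by
      simpa [ENNReal.sub_half ENNReal.one_ne_top] using tsub_le_tsub_left hXr (1 : ℝ≥0∞)
    simpa using ENNReal.inv_le_inv.2 h
  calc ∑' c, g c = X ^ (j - 1) * r ^ j * (1 - X * r)⁻¹ := by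
        rw [← hsplit, tsum_congr hshift, ENNReal.tsum_mul_left, ENNReal.tsum_geometric]
    _ ≤ 1 * r ^ j * 2 := by
        gcongr
        exact pow_le_one₀ (by positivity) (hX.trans (by norm_num))
    _ = 2 * r ^ j := by ring

theorem tsum_ite_le_prod_pow_mul_le {X : ℝ≥0∞} (hX : X ≤ 1 / 2) {n : ℕ}
    {r : Fin n → ℝ≥0∞} (hr : ∀ i, r i ≤ 1) {j : Fin n → ℕ} (hj : ∀ i, 1 ≤ j i) :
    ∑' κ : Fin n → ℕ, (if j ≤ κ then ∏ i, X ^ (κ i - 1) * r i ^ κ i else 0)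
      ≤ 2 ^ n * ∏ i, r i ^ j i := by
  have hsplit : ∀ κ : Fin n → ℕ, (if j ≤ κ then ∏ i, X ^ (κ i - 1) * r i ^ κ i else 0)
      = ∏ i, if j i ≤ κ i then X ^ (κ i - 1) * r i ^ κ i else 0 := fun κ => by
    simp [Finset.prod_ite_zero, Pi.le_def]
  rw [tsum_congr hsplit,
    tsum_fin_pi_prod fun i c => if j i ≤ c then X ^ (c - 1) * r i ^ c else 0]
  calc ∏ i, ∑' c, (if j i ≤ c then X ^ (c - 1) * r i ^ c else 0)
      ≤ ∏ i, 2 * r i ^ j i :=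
        Finset.prod_le_prod' fun i _ => tsum_ite_le_pow_mul_pow_le hX (hr i) (hj i)
    _ = 2 ^ n * ∏ i, r i ^ j i := by simp [Finset.prod_mul_distrib]

end ENNReal

lemma harmonic_real_nonneg (M : ℕ) : 0 ≤ (harmonic M : ℝ) := by
  rcases M.eq_zero_or_pos with rfl | hM
  · simp
  · exact_mod_cast (harmonic_pos hM.ne').le

lemma sum_inv_mul_harmonic_pow_le (r M : ℕ) :
    ∑ L ∈ Icc 1 M, (L : ℝ)⁻¹ * (harmonic (L - 1) : ℝ) ^ r * (r + 1)
      ≤ (harmonic M : ℝ) ^ (r + 1) := by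
  induction M with
  | zero => simp
  | succ M ih =>
    have hbern := pow_add_mul_le_add_pow (harmonic_real_nonneg M)
      (b := ((M : ℝ) + 1)⁻¹) (by have := harmonic_real_nonneg M; positivity) (r + 1)
    rw [Finset.sum_Icc_succ_top (by omega), harmonic_succ]
    push_cast at hbern ⊢
    linarith

/-- The elementary symmetric polynomial `e_r(1, 1/2, …, 1/M)`. -/
def esymmInv (r M : ℕ) : ℝ≥0∞ :=
  ∑' m : Fin r → ℕ, if StrictMono m ∧ ∀ i, m i ∈ Icc 1 M then ∏ i, (m i : ℝ≥0∞)⁻¹ else 0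

lemma strictMono_snoc_and_mem_Icc_iff {r L M : ℕ} {m : Fin r → ℕ} :
    (StrictMono (Fin.snoc m L : Fin (r + 1) → ℕ) ∧
        ∀ i, (Fin.snoc m L : Fin (r + 1) → ℕ) i ∈ Icc 1 M)
      ↔ L ∈ Icc 1 M ∧ StrictMono m ∧ ∀ i, m i ∈ Icc 1 (L - 1) := by
  simp only [Fin.strictMono_snoc_iff, Fin.forall_fin_succ', Fin.snoc_castSucc, Fin.snoc_last,
    Finset.mem_Icc]
  grind

lemma strictMono_snoc_and_pos_iff {r L : ℕ} {m : Fin r → ℕ} :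
    (StrictMono (Fin.snoc m L : Fin (r + 1) → ℕ) ∧ ∀ i, 0 < (Fin.snoc m L : Fin (r + 1) → ℕ) i)
      ↔ 0 < L ∧ StrictMono m ∧ ∀ i, m i ∈ Icc 1 (L - 1) := by
  simp only [Fin.strictMono_snoc_iff, Fin.forall_fin_succ', Fin.snoc_castSucc, Fin.snoc_last,
    Finset.mem_Icc]
  grind

lemma esymmInv_zero (M : ℕ) : esymmInv 0 M = 1 := by
  simp [esymmInv, Subsingleton.strictMono]

lemma esymmInv_succ (r M : ℕ) :
    esymmInv (r + 1) M = ∑ L ∈ Icc 1 M, (L : ℝ≥0∞)⁻¹ * esymmInv r (L - 1) := by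
  have hL : ∀ L, ∑' m : Fin r → ℕ,
      (if StrictMono (Fin.snoc m L : Fin (r + 1) → ℕ) ∧
          ∀ i, (Fin.snoc m L : Fin (r + 1) → ℕ) i ∈ Icc 1 M
        then ∏ i, ((Fin.snoc m L : Fin (r + 1) → ℕ) i : ℝ≥0∞)⁻¹ else 0)
      = if L ∈ Icc 1 M then (L : ℝ≥0∞)⁻¹ * esymmInv r (L - 1) else 0 := fun L => by
    split_ifs with hLM
    · rw [esymmInv, ← ENNReal.tsum_mul_left]
      refine tsum_congr fun m => ?_
      simp only [strictMono_snoc_and_mem_Icc_iff, hLM, true_and, Fin.prod_univ_castSucc,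
        Fin.snoc_castSucc, Fin.snoc_last]
      split_ifs <;> ring
    · simp only [strictMono_snoc_and_mem_Icc_iff, hLM, false_and, if_false, tsum_zero]
  rw [esymmInv, ENNReal.tsum_fin_snoc, tsum_congr hL, tsum_eq_sum fun L hL => if_neg hL]
  exact Finset.sum_congr rfl fun L hL => if_pos hL

lemma esymmInv_le (r M : ℕ) :
    esymmInv r M ≤ ENNReal.ofReal ((harmonic M : ℝ) ^ r / r.factorial) := by
  induction r generalizing M with
  | zero => simp [esymmInv_zero]
  | succ r ih =>
    have hterm : ∀ L ∈ Icc 1 M, (L : ℝ≥0∞)⁻¹ * esymmInv r (L - 1)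
        ≤ ENNReal.ofReal ((L : ℝ)⁻¹ * ((harmonic (L - 1) : ℝ) ^ r / r.factorial)) := by
      intro L hL
      have hL0 : (0 : ℝ) < L := by exact_mod_cast (Finset.mem_Icc.1 hL).1
      rw [ENNReal.ofReal_mul (by positivity), ENNReal.ofReal_inv_of_pos hL0, ENNReal.ofReal_natCast]
      gcongr
      exact ih (L - 1)
    have hsum : ∑ L ∈ Icc 1 M, (L : ℝ)⁻¹ * ((harmonic (L - 1) : ℝ) ^ r / r.factorial)
        ≤ (harmonic M : ℝ) ^ (r + 1) / (r + 1).factorial := by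
      calc ∑ L ∈ Icc 1 M, (L : ℝ)⁻¹ * ((harmonic (L - 1) : ℝ) ^ r / r.factorial)
          = (∑ L ∈ Icc 1 M, (L : ℝ)⁻¹ * (harmonic (L - 1) : ℝ) ^ r * (r + 1))
              / (r + 1).factorial := by
            rw [Finset.sum_div]
            refine Finset.sum_congr rfl fun L _ => ?_
            push_cast [Nat.factorial_succ]
            field_simp
        _ ≤ (harmonic M : ℝ) ^ (r + 1) / (r + 1).factorial := by
            gcongr
            exact sum_inv_mul_harmonic_pow_le r M
    rw [esymmInv_succ]
    calc ∑ L ∈ Icc 1 M, (L : ℝ≥0∞)⁻¹ * esymmInv r (L - 1)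
        ≤ ∑ L ∈ Icc 1 M, ENNReal.ofReal ((L : ℝ)⁻¹ * ((harmonic (L - 1) : ℝ) ^ r / r.factorial)) :=
          Finset.sum_le_sum hterm
      _ ≤ _ := by
          rw [← ENNReal.ofReal_sum_of_nonneg fun L _ => by
            have := harmonic_real_nonneg (L - 1); positivity]
          exact ENNReal.ofReal_le_ofReal hsum

lemma tsum_pow_mul_esymmInv_le {a : ℝ} (ha : 0 ≤ a) (M : ℕ) :
    ∑' r, ENNReal.ofReal a ^ r * esymmInv r M ≤ ENNReal.ofReal (Real.exp (a * harmonic M)) := by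
  have hH := harmonic_real_nonneg M
  calc ∑' r, ENNReal.ofReal a ^ r * esymmInv r M
      ≤ ∑' r, ENNReal.ofReal ((a * harmonic M) ^ r / r.factorial) := by
        refine ENNReal.tsum_le_tsum fun r => ?_
        rw [mul_pow, mul_div_assoc, ENNReal.ofReal_mul (by positivity), ENNReal.ofReal_pow ha]
        gcongr
        exact esymmInv_le r M
    _ = ENNReal.ofReal (Real.exp (a * harmonic M)) := by
        rw [← ENNReal.ofReal_tsum_of_nonneg (fun r => by positivity)
          (Real.summable_pow_div_factorial _), Real.exp_eq_exp_ℝ, NormedSpace.exp_eq_tsum_div]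

lemma exp_mul_harmonic_pred_le {a : ℝ} (ha : 0 ≤ a) {L : ℕ} (hL : 0 < L) :
    Real.exp (a * harmonic (L - 1)) ≤ Real.exp a * (L : ℝ) ^ a := by
  have hlog : (harmonic (L - 1) : ℝ) ≤ 1 + Real.log L := by
    refine (harmonic_le_one_add_log (L - 1)).trans (add_le_add_right ?_ 1)
    rcases (L - 1).eq_zero_or_pos with h | h
    · simpa [h] using Real.log_natCast_nonneg L
    · exact Real.log_le_log (by exact_mod_cast h) (by exact_mod_cast L.sub_le 1)
  rw [Real.rpow_def_of_pos (by exact_mod_cast hL), ← Real.exp_add]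
  gcongr
  linarith [mul_le_mul_of_nonneg_left hlog ha]

/-- The multiple zeta value `ζ(k₁, …, kₙ)`. -/
def mzv {n : ℕ} (k : Fin n → ℕ) : ℝ≥0∞ :=
  ∑' m : Fin n → ℕ, if StrictMono m ∧ ∀ i, 0 < m i then ∏ i, (m i : ℝ≥0∞)⁻¹ ^ k i else 0

def onesTwo (N : ℕ) : Fin (N + 1) → ℕ := fun i => if i = Fin.last N then 2 else 1

lemma mzv_onesTwo (N : ℕ) :
    mzv (onesTwo N) = ∑' L : ℕ, if 0 < L then (L : ℝ≥0∞)⁻¹ ^ 2 * esymmInv N (L - 1) else 0 := by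
  rw [mzv, ENNReal.tsum_fin_snoc]
  refine tsum_congr fun L => ?_
  simp only [strictMono_snoc_and_pos_iff, Fin.prod_univ_castSucc, Fin.snoc_castSucc,
    Fin.snoc_last, onesTwo, Fin.castSucc_ne_last, if_true, if_false, pow_one]
  split_ifs with hL
  · rw [esymmInv, ← ENNReal.tsum_mul_left]
    refine tsum_congr fun m => ?_
    simp only [hL, true_and]
    split_ifs <;> ring
  · simp [hL]

lemma tsum_pow_mul_mzv_onesTwo_ne_top {a : ℝ} (ha : 0 ≤ a) (ha1 : a < 1) :
    ∑' N, ENNReal.ofReal a ^ N * mzv (onesTwo N) ≠ ⊤ := by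
  have hL : ∀ L : ℕ, ∑' N, ENNReal.ofReal a ^ N *
      (if 0 < L then (L : ℝ≥0∞)⁻¹ ^ 2 * esymmInv N (L - 1) else 0)
      ≤ ENNReal.ofReal (Real.exp a * (L : ℝ) ^ (a - 2)) := fun L => by
    rcases L.eq_zero_or_pos with rfl | hL
    · simp
    have hL0 : (0 : ℝ) < L := by exact_mod_cast hL
    simp only [hL, if_true, mul_left_comm _ ((L : ℝ≥0∞)⁻¹ ^ 2), ENNReal.tsum_mul_left]
    calc (L : ℝ≥0∞)⁻¹ ^ 2 * ∑' N, ENNReal.ofReal a ^ N * esymmInv N (L - 1)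
        ≤ ENNReal.ofReal ((L : ℝ)⁻¹ ^ 2) * ENNReal.ofReal (Real.exp a * (L : ℝ) ^ a) := by
          rw [ENNReal.ofReal_pow (by positivity), ENNReal.ofReal_inv_of_pos hL0,
            ENNReal.ofReal_natCast]
          gcongr
          exact (tsum_pow_mul_esymmInv_le ha _).trans
            (ENNReal.ofReal_le_ofReal (exp_mul_harmonic_pred_le ha hL))
      _ = ENNReal.ofReal (Real.exp a * (L : ℝ) ^ (a - 2)) := by
          rw [← ENNReal.ofReal_mul (by positivity), Real.rpow_sub hL0, Real.rpow_two]
          ring_nf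
  have hsum : Summable fun L : ℕ => Real.exp a * (L : ℝ) ^ (a - 2) :=
    (Real.summable_nat_rpow.2 (by linarith)).mul_left _
  simp only [mzv_onesTwo, ← ENNReal.tsum_mul_left]
  rw [ENNReal.tsum_comm]
  refine ne_top_of_le_ne_top ?_ (ENNReal.tsum_le_tsum hL)
  rw [← ENNReal.ofReal_tsum_of_nonneg (fun L => by positivity) hsum]
  exact ENNReal.ofReal_ne_top

def athBound {n : ℕ} (κ : Fin n → ℕ) : ℝ≥0∞ :=
  ∑' m : Fin n → ℕ, if athCond n m then (∏ i, (m i : ℝ≥0∞) ^ κ i)⁻¹ else 0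

lemma enorm_Ath_le {n : ℕ} (κ : Fin n → ℕ) {t : ℂ} (ht : ‖t‖ ≤ 1) : ‖Ath κ t‖ₑ ≤ athBound κ := by
  refine enorm_tsum_le_tsum_enorm.trans (ENNReal.tsum_le_tsum fun m => ?_)
  split_ifs
  · have hprod : ‖∏ i, ((m i : ℂ) ^ κ i)‖ₑ = ∏ i, (m i : ℝ≥0∞) ^ κ i := by
      simp [enorm_eq_nnnorm, nnnorm_prod]
    have ht' : ‖t ^ lastExp m‖ₑ ≤ 1 := by
      rw [enorm_pow, ← ofReal_norm]
      exact pow_le_one' (ENNReal.ofReal_le_one.2 ht) _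
    calc ‖t ^ lastExp m / ∏ i, ((m i : ℂ) ^ κ i)‖ₑ
        ≤ ‖t ^ lastExp m‖ₑ * ‖∏ i, ((m i : ℂ) ^ κ i)‖ₑ⁻¹ := by
          simp only [enorm_eq_nnnorm, nnnorm_div, ← div_eq_mul_inv]
          exact ENNReal.coe_div_le
      _ ≤ _ := by rw [hprod]; exact mul_le_of_le_one_left' ht'
  · simp

def phi0Bound (X Y Z : ℝ≥0∞) (p : ℕ × ℕ × ℕ) : ℝ≥0∞ :=
  if 1 ≤ p.1 ∧ 1 ≤ p.2.1 ∧ 1 ≤ p.2.2 then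
    2 ^ p.2.1 * (∑' κ, if IdxCond0 p.1 p.2.1 p.2.2 κ then athBound κ else 0)
      * X ^ (p.1 - p.2.1 - p.2.2) * Y ^ (p.2.1 - p.2.2) * Z ^ (2 * (p.2.2 - 1))
  else 0

lemma enorm_G0_le (k n s : ℕ) {t : ℂ} (ht : ‖t‖ ≤ 1) :
    ‖G0 k n s t‖ₑ ≤ 2 ^ n * ∑' κ, if IdxCond0 k n s κ then athBound κ else 0 := by
  rw [G0, enorm_mul, enorm_pow]
  gcongr
  · rw [← ofReal_norm]
    simp
  · refine enorm_tsum_le_tsum_enorm.trans (ENNReal.tsum_le_tsum fun κ => ?_)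
    split_ifs
    · exact enorm_Ath_le κ ht
    · simp

lemma enorm_Phi0Term_le (x y z : ℂ) (p : ℕ × ℕ × ℕ) {t : ℂ} (ht : ‖t‖ ≤ 1) :
    ‖Phi0Term x y z p t‖ₑ ≤ phi0Bound ‖x‖ₑ ‖y‖ₑ ‖z‖ₑ p := by
  rw [Phi0Term, phi0Bound]
  split_ifs
  · simp only [enorm_mul, enorm_pow]
    gcongr
    exact enorm_G0_le _ _ _ ht
  · simp

namespace IdxCond

variable {k n s : ℕ} {κ : Fin n → ℕ}

lemma height_le_depth (h : IdxCond k n s κ) : s ≤ n := by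
  simpa [← h.2.2] using Finset.card_filter_le (univ : Finset (Fin n)) fun i => 2 ≤ κ i

lemma depth_add_height_le (h : IdxCond k n s κ) : n + s ≤ k := by
  obtain ⟨hpos, rfl, rfl⟩ := h
  calc n + #{i | 2 ≤ κ i} = ∑ i, (1 + if 2 ≤ κ i then 1 else 0) := by
        rw [Finset.sum_add_distrib, Finset.card_filter]
        simp
    _ ≤ ∑ i, κ i := Finset.sum_le_sum fun i _ => by have := hpos i; split_ifs <;> omega

lemma sum_sub_one (h : IdxCond k n s κ) : ∑ i, (κ i - 1) = k - n := by
  obtain ⟨hpos, rfl, -⟩ := h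
  simp [Finset.sum_tsub_distrib _ fun i _ => hpos i]

end IdxCond

def athWeight (X : ℝ≥0∞) {n : ℕ} (κ : Fin n → ℕ) : ℝ≥0∞ :=
  ∑' m : Fin n → ℕ, if athCond n m then ∏ i, X ^ (κ i - 1) * (m i : ℝ≥0∞)⁻¹ ^ κ i else 0

lemma IdxCond.pow_mul_athBound {k n s : ℕ} {κ : Fin n → ℕ} (h : IdxCond k n s κ) (X : ℝ≥0∞) :
    X ^ (k - n) * athBound κ = athWeight X κ := by
  rw [athBound, ← ENNReal.tsum_mul_left]
  refine tsum_congr fun m => ?_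
  split_ifs
  · rw [Finset.prod_mul_distrib, Finset.prod_pow_eq_pow_sum, h.sum_sub_one,
      ENNReal.prod_inv_distrib fun i _ j _ _ => Or.inr (by simp)]
    simp [ENNReal.inv_pow]
  · simp

lemma mul_pow_mul_pow_mul_pow_le {X Y Z : ℝ≥0∞} (hZ : Z ^ 2 ≤ X * Y) {k n s : ℕ} (hs : 1 ≤ s)
    (hsn : s ≤ n) (hk : n + s ≤ k) :
    X * (X ^ (k - n - s) * Y ^ (n - s) * Z ^ (2 * (s - 1))) ≤ X ^ (k - n) * Y ^ (n - 1) := by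
  calc X * (X ^ (k - n - s) * Y ^ (n - s) * Z ^ (2 * (s - 1)))
      ≤ X * (X ^ (k - n - s) * Y ^ (n - s) * (X * Y) ^ (s - 1)) := by
        rw [pow_mul]
        gcongr
    _ = X ^ (1 + (k - n - s) + (s - 1)) * Y ^ (n - s + (s - 1)) := by ring
    _ = X ^ (k - n) * Y ^ (n - 1) := by
        rw [show 1 + (k - n - s) + (s - 1) = k - n by omega, show n - s + (s - 1) = n - 1 by omega]

lemma mul_phi0Bound_le {X Y Z : ℝ≥0∞} (hZ : Z ^ 2 ≤ X * Y) (k n s : ℕ) :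
    X * phi0Bound X Y Z (k, n, s)
      ≤ 2 ^ n * Y ^ (n - 1) * ∑' κ, if IdxCond0 k n s κ then athWeight X κ else 0 := by
  rw [phi0Bound]
  split_ifs with hflag
  · set c := X * (X ^ (k - n - s) * Y ^ (n - s) * Z ^ (2 * (s - 1)))
    calc X * (2 ^ n * (∑' κ, if IdxCond0 k n s κ then athBound κ else 0) * X ^ (k - n - s)
          * Y ^ (n - s) * Z ^ (2 * (s - 1)))
        = 2 ^ n * ∑' κ, c * (if IdxCond0 k n s κ then athBound κ else 0) := by
          rw [ENNReal.tsum_mul_left]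
          ring
      _ ≤ 2 ^ n * ∑' κ, Y ^ (n - 1) * (if IdxCond0 k n s κ then athWeight X κ else 0) := by
          gcongr 2 ^ n * ?_
          refine ENNReal.tsum_le_tsum fun κ => ?_
          split_ifs with hκ
          · rw [← hκ.1.pow_mul_athBound, ← mul_assoc, mul_comm (Y ^ _)]
            gcongr
            exact mul_pow_mul_pow_mul_pow_le hZ hflag.2.2 hκ.1.height_le_depth
              hκ.1.depth_add_height_le
          · simp
      _ = _ := by
          rw [ENNReal.tsum_mul_left]
          ring
  · simp

lemma tsum_tsum_ite_idxCond0 {n : ℕ} (κ : Fin n → ℕ) (a : ℝ≥0∞) :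
    ∑' (k : ℕ) (s : ℕ), (if IdxCond0 k n s κ then a else 0)
      = if IdxCond0 (∑ i, κ i) n #{i | 2 ≤ κ i} κ then a else 0 := by
  rw [tsum_eq_single (∑ i, κ i), tsum_eq_single #{i | 2 ≤ κ i}]
  · exact fun s hs => if_neg fun h => hs h.1.2.2.symm
  · exact fun k hk => ENNReal.tsum_eq_zero.2 fun s => if_neg fun h => hk h.1.2.1.symm

lemma idxCond0_iff_onesTwo_le {N : ℕ} (κ : Fin (N + 1) → ℕ) :
    IdxCond0 (∑ i, κ i) (N + 1) #{i | 2 ≤ κ i} κ ↔ onesTwo N ≤ κ := by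
  simp only [IdxCond0, IdxCond, Pi.le_def, onesTwo, and_true]
  constructor
  · rintro ⟨hpos, hlast⟩ i
    split_ifs with hi
    · exact hi ▸ hlast N.succ_pos
    · exact hpos i
  · intro h
    refine ⟨fun i => le_trans (by split_ifs <;> norm_num) (h i), fun _ => ?_⟩
    exact (by simpa using h (Fin.last N) : 2 ≤ κ (Fin.last N))

lemma tsum_ite_athWeight_le {X : ℝ≥0∞} (hX : X ≤ 1 / 2) (N : ℕ) :
    ∑' κ : Fin (N + 1) → ℕ,
        (if IdxCond0 (∑ i, κ i) (N + 1) #{i | 2 ≤ κ i} κ then athWeight X κ else 0)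
      ≤ 2 ^ (N + 1) * mzv (onesTwo N) := by
  have hswap : ∀ κ : Fin (N + 1) → ℕ,
      (if IdxCond0 (∑ i, κ i) (N + 1) #{i | 2 ≤ κ i} κ then athWeight X κ else 0)
      = ∑' m : Fin (N + 1) → ℕ, if athCond (N + 1) m then
          (if onesTwo N ≤ κ then ∏ i, X ^ (κ i - 1) * (m i : ℝ≥0∞)⁻¹ ^ κ i else 0) else 0 :=
    fun κ => by
      rw [athWeight, idxCond0_iff_onesTwo_le]
      split_ifs <;> simp
  rw [tsum_congr hswap, ENNReal.tsum_comm, mzv, ← ENNReal.tsum_mul_left]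
  refine ENNReal.tsum_le_tsum fun m => ?_
  by_cases hm : athCond (N + 1) m
  · have hpos : ∀ i, 0 < m i := fun i => (hm.2 i).2
    simp only [hm, if_true, if_pos (And.intro hm.1 hpos)]
    exact ENNReal.tsum_ite_le_prod_pow_mul_le hX (fun i => ENNReal.inv_le_one.2
      (by exact_mod_cast hpos i)) fun i => by simp only [onesTwo]; split_ifs <;> norm_num
  · simp [hm]

lemma tsum_tsum_mul_phi0Bound_le {X Y Z : ℝ≥0∞} (hX : X ≤ 1 / 2) (hZ : Z ^ 2 ≤ X * Y) (N : ℕ) :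
    ∑' (k : ℕ) (s : ℕ), X * phi0Bound X Y Z (k, N + 1, s) ≤ 4 * (4 * Y) ^ N * mzv (onesTwo N) := by
  calc ∑' (k : ℕ) (s : ℕ), X * phi0Bound X Y Z (k, N + 1, s)
      ≤ ∑' (k : ℕ) (s : ℕ), 2 ^ (N + 1) * Y ^ N *
          ∑' κ, if IdxCond0 k (N + 1) s κ then athWeight X κ else 0 :=
        ENNReal.tsum_le_tsum fun k => ENNReal.tsum_le_tsum fun s => mul_phi0Bound_le hZ k (N + 1) s
    _ = 2 ^ (N + 1) * Y ^ N * ∑' κ : Fin (N + 1) → ℕ,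
          (if IdxCond0 (∑ i, κ i) (N + 1) #{i | 2 ≤ κ i} κ then athWeight X κ else 0) := by
        simp only [ENNReal.tsum_mul_left, ← tsum_tsum_ite_idxCond0]
        congr 1
        exact (tsum_congr fun k => ENNReal.tsum_comm).trans ENNReal.tsum_comm
    _ ≤ 2 ^ (N + 1) * Y ^ N * (2 ^ (N + 1) * mzv (onesTwo N)) := by
        gcongr
        exact tsum_ite_athWeight_le hX N
    _ = 4 * (4 * Y) ^ N * mzv (onesTwo N) := by
        rw [mul_pow, show (4 : ℝ≥0∞) ^ N = 2 ^ N * 2 ^ N by rw [← mul_pow]; norm_num]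
        ring

lemma tsum_phi0Bound_ne_top {X Y Z : ℝ≥0∞} (hX : X ≤ 1 / 2) (hX0 : X ≠ 0) (hY : 4 * Y < 1)
    (hZ : Z ^ 2 ≤ X * Y) : ∑' p, phi0Bound X Y Z p ≠ ⊤ := by
  set a := (4 * Y).toReal
  have ha : ENNReal.ofReal a = 4 * Y := ENNReal.ofReal_toReal (ne_top_of_lt hY)
  have ha1 : a < 1 := ENNReal.toReal_lt_of_lt_ofReal (by simpa using hY)
  have hdepth0 : ∀ k s, X * phi0Bound X Y Z (k, 0, s) = 0 := fun k s => by simp [phi0Bound]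
  have hmul : X * ∑' p, phi0Bound X Y Z p ≠ ⊤ := by
    rw [← ENNReal.tsum_mul_left, ENNReal.tsum_prod']
    simp only [ENNReal.tsum_prod']
    rw [ENNReal.tsum_comm, tsum_eq_zero_add' ENNReal.summable]
    simp only [hdepth0, tsum_zero, zero_add]
    refine ne_top_of_le_ne_top ?_ (ENNReal.tsum_le_tsum (tsum_tsum_mul_phi0Bound_le hX hZ))
    simp only [← ha, mul_assoc, ENNReal.tsum_mul_left]
    exact ENNReal.mul_ne_top (by simp) (tsum_pow_mul_mzv_onesTwo_ne_top ENNReal.toReal_nonneg ha1)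
  exact fun h => hmul (by rw [h, ENNReal.mul_top hX0])

theorem Phi0_unif_conv_general (x y z : ℂ) (hx : ‖x‖ < 1 / 2) (hy : ‖y‖ < 1 / 4)
    (hz : ‖z ^ 2‖ < ‖x * y‖) :
    TendstoUniformlyOn
      (fun (S : Finset (ℕ × ℕ × ℕ)) (t : ℂ) => ∑ p ∈ S, Phi0Term x y z p t)
      (fun t => Phi0 x y z t) atTop {t : ℂ | ‖t‖ ≤ 1} := by
  have hX : ‖x‖ₑ ≤ 1 / 2 := by
    simpa [← ofReal_norm] using ENNReal.ofReal_le_ofReal hx.le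
  have hX0 : ‖x‖ₑ ≠ 0 := by
    simpa using left_ne_zero_of_mul (norm_pos_iff.1 ((norm_nonneg _).trans_lt hz))
  have hY : 4 * ‖y‖ₑ < 1 := by
    rw [← ofReal_norm, ← ENNReal.ofReal_ofNat 4, ← ENNReal.ofReal_mul (by norm_num)]
    exact ENNReal.ofReal_lt_one.2 (by linarith)
  have hZ : ‖z‖ₑ ^ 2 ≤ ‖x‖ₑ * ‖y‖ₑ := by
    rw [← enorm_pow, ← enorm_mul]
    simpa [← ofReal_norm] using ENNReal.ofReal_le_ofReal hz.le
  have hfin := tsum_phi0Bound_ne_top hX hX0 hY hZ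
  refine tendstoUniformlyOn_tsum (ENNReal.summable_toReal hfin) fun p t ht => ?_
  rw [← toReal_enorm]
  exact ENNReal.toReal_mono (ENNReal.ne_top_of_tsum_ne_top hfin p) (enorm_Phi0Term_le x y z p ht)

/-- The series defining `Φ₀(x,y,z;t)` converges uniformly on the closed disk `|t| ≤ 1`. -/
theorem Phi0_unif_conv (x y z : ℂ) (hx : ‖x‖ < 1 / 2) (hy : ‖y‖ < 1 / 4)
    (hx0 : x ≠ 0) (hy0 : y ≠ 0) (hz : ‖z ^ 2‖ < ‖x * y‖) :
    TendstoUniformlyOn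
      (fun (S : Finset (ℕ × ℕ × ℕ)) (t : ℂ) => ∑ p ∈ S, Phi0Term x y z p t)
      (fun t => Phi0 x y z t) atTop {t : ℂ | ‖t‖ ≤ 1} :=
  Phi0_unif_conv_general x y z hx hy hz

end
end

section
/- Let x, y, z be complex numbers and let u be a function holomorphic on a disk |t| < r (0 < r ≤ 1) satisfying t(1−t²) u″ + ( (1−x)(1−t²) − 2ty ) u′ + 2(xy − z²) u = 0. Define v(t) = (1−t)^y ( t u′(t) − x u(t) ) (principal branch of (1−t)^y). Then v is holomorphic on |t| < min(r,1), v(0) = −x u(0), and v satisfies t(1−t²) v″ − ( x(1−t²) − 2(y−1)t² ) v′ − ( (2z² − xy) + y(y+x−1) t ) v = 0. -/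
open Complex Filter Metric Finset

attribute [local instance] Classical.propDecidable

noncomputable section

/-!
Write `v = (1 - t)^y w` with `w = t u' - x u`. If `E` denotes the left-hand side of the equation
for `u`, then `t E' - x E` is exactly `t(1-t²) w'' - (x(1-t²) + 2t(y+t)) w' + 2(xy-z²) w`, so `w`
satisfies this second-order equation. Conjugating its operator by the factor `(1 - t)^y`, which is
holomorphic on `|t| < 1`, turns it into the operator of the transformed equation:
the latter applied to `(1 - t)^y w` equals `(1 - t)^y` times the former applied to `w`.
-/

open Topology

section Gauge

variable {w : ℂ → ℂ} {t : ℂ}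

theorem hasDerivAt_one_sub_cpow (c : ℂ) (ht : 1 - t ∈ slitPlane) :
    HasDerivAt (fun s : ℂ => (1 - s) ^ c) (-(c * (1 - t) ^ (c - 1))) t := by
  simpa using ((hasDerivAt_id t).const_sub 1).cpow_const (c := c) ht

theorem hasDerivAt_one_sub_cpow_mul (y : ℂ) (hw : DifferentiableAt ℂ w t)
    (ht : 1 - t ∈ slitPlane) :
    HasDerivAt (fun s => (1 - s) ^ y * w s)
      ((1 - t) ^ y * deriv w t - y * (1 - t) ^ (y - 1) * w t) t :=
  ((hasDerivAt_one_sub_cpow y ht).mul hw.hasDerivAt).congr_deriv (by ring)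

theorem deriv_deriv_one_sub_cpow_mul (y : ℂ) (hw : AnalyticAt ℂ w t)
    (ht : 1 - t ∈ slitPlane) :
    deriv (deriv fun s => (1 - s) ^ y * w s) t
      = (1 - t) ^ y * deriv (deriv w) t - 2 * y * (1 - t) ^ (y - 1) * deriv w t
        + y * (y - 1) * (1 - t) ^ (y - 2) * w t := by
  have hslit : ∀ᶠ s in 𝓝 t, 1 - s ∈ slitPlane :=
    (continuous_const.sub continuous_id).continuousAt.eventually_mem
      (isOpen_slitPlane.mem_nhds ht)
  have hderiv : deriv (fun s => (1 - s) ^ y * w s) =ᶠ[𝓝 t]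
      fun s => (1 - s) ^ y * deriv w s - y * (1 - s) ^ (y - 1) * w s := by
    filter_upwards [hw.eventually_analyticAt, hslit] with s hws hs
    exact (hasDerivAt_one_sub_cpow_mul y hws.differentiableAt hs).deriv
  have hpow : (1 - t) ^ (y - 1 - 1) = (1 - t) ^ (y - 2) := by ring_nf
  rw [hderiv.deriv_eq]
  refine ((hasDerivAt_one_sub_cpow_mul y hw.deriv.differentiableAt ht).sub
    (((hasDerivAt_one_sub_cpow (y - 1) ht).const_mul y).mul
      hw.differentiableAt.hasDerivAt)).deriv.trans ?_
  rw [hpow]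
  ring

theorem one_sub_cpow_mul_transform (x y z : ℂ) (hw : AnalyticAt ℂ w t)
    (ht : 1 - t ∈ slitPlane) :
    t * (1 - t ^ 2) * deriv (deriv fun s => (1 - s) ^ y * w s) t
        - (x * (1 - t ^ 2) - 2 * (y - 1) * t ^ 2) * deriv (fun s => (1 - s) ^ y * w s) t
        - ((2 * z ^ 2 - x * y) + y * (y + x - 1) * t) * ((1 - t) ^ y * w t)
      = (1 - t) ^ y * (t * (1 - t ^ 2) * deriv (deriv w) t
        - (x * (1 - t ^ 2) + 2 * t * (y + t)) * deriv w t + 2 * (x * y - z ^ 2) * w t) := by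
  have hpow (c : ℂ) : (1 - t) ^ (c + 1) = (1 - t) ^ c * (1 - t) := by
    rw [cpow_add _ _ (slitPlane_ne_zero ht), cpow_one]
  have hpow_sub_one : (1 - t) ^ (y - 1) = (1 - t) ^ (y - 2) * (1 - t) := by
    rw [← hpow]; ring_nf
  have hpow_self : (1 - t) ^ y = (1 - t) ^ (y - 2) * (1 - t) ^ 2 := by
    rw [sq, ← mul_assoc, ← hpow_sub_one, ← hpow]; ring_nf
  rw [deriv_deriv_one_sub_cpow_mul y hw ht,
    (hasDerivAt_one_sub_cpow_mul y hw.differentiableAt ht).deriv, hpow_self, hpow_sub_one]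
  ring

end Gauge

section Heun

variable {u : ℂ → ℂ} {t : ℂ}

theorem hasDerivAt_mul_deriv_sub (x : ℂ) (hu : DifferentiableAt ℂ u t)
    (hu' : DifferentiableAt ℂ (deriv u) t) :
    HasDerivAt (fun s => s * deriv u s - x * u s)
      (t * deriv (deriv u) t - (x - 1) * deriv u t) t :=
  (((hasDerivAt_id t).mul hu'.hasDerivAt).sub (hu.hasDerivAt.const_mul x)).congr_deriv
    (by simp only [id_eq]; ring)

theorem deriv_mul_deriv_sub (x : ℂ) (hu : AnalyticAt ℂ u t) :
    deriv (fun s => s * deriv u s - x * u s) =ᶠ[𝓝 t]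
      fun s => s * deriv (deriv u) s - (x - 1) * deriv u s := by
  filter_upwards [hu.eventually_analyticAt] with s hs
  exact (hasDerivAt_mul_deriv_sub x hs.differentiableAt hs.deriv.differentiableAt).deriv

theorem mul_deriv_sub_ode_of_heun_ode (x y z : ℂ) (hu : AnalyticAt ℂ u t)
    (hode : ∀ᶠ s in 𝓝 t, s * (1 - s ^ 2) * deriv (deriv u) s
      + ((1 - x) * (1 - s ^ 2) - 2 * s * y) * deriv u s + 2 * (x * y - z ^ 2) * u s = 0) :
    t * (1 - t ^ 2) * deriv (deriv fun s => s * deriv u s - x * u s) t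
      - (x * (1 - t ^ 2) + 2 * t * (y + t)) * deriv (fun s => s * deriv u s - x * u s) t
      + 2 * (x * y - z ^ 2) * (t * deriv u t - x * u t) = 0 := by
  have hu' := hu.deriv
  have hu'' := hu'.deriv
  have hode_deriv : (1 - 3 * t ^ 2) * deriv (deriv u) t
      + t * (1 - t ^ 2) * deriv (deriv (deriv u)) t
      - (2 * t * (1 - x) + 2 * y) * deriv u t
      + ((1 - x) * (1 - t ^ 2) - 2 * t * y) * deriv (deriv u) t
      + 2 * (x * y - z ^ 2) * deriv u t = 0 := by
    have hcubic : HasDerivAt (fun s : ℂ => s * (1 - s ^ 2)) (1 - 3 * t ^ 2) t :=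
      ((hasDerivAt_id t).mul (((hasDerivAt_id t).pow 2).const_sub 1)).congr_deriv
        (by simp only [id_eq, Pi.pow_apply]; ring)
    have hquad : HasDerivAt (fun s : ℂ => (1 - x) * (1 - s ^ 2) - 2 * s * y)
        (-(2 * t * (1 - x) + 2 * y)) t :=
      (((((hasDerivAt_id t).pow 2).const_sub 1).const_mul (1 - x)).sub
        (((hasDerivAt_id t).const_mul 2).mul_const y)).congr_deriv (by simp only [id_eq]; ring)
    linear_combination (((hcubic.mul hu''.differentiableAt.hasDerivAt).add
      (hquad.mul hu'.differentiableAt.hasDerivAt)).add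
      (hu.differentiableAt.hasDerivAt.const_mul (2 * (x * y - z ^ 2)))).unique
      ((hasDerivAt_const t 0).congr_of_eventuallyEq hode)
  rw [(deriv_mul_deriv_sub x hu).deriv_eq, (deriv_mul_deriv_sub x hu).eq_of_nhds,
    (hasDerivAt_mul_deriv_sub (x - 1) hu'.differentiableAt hu''.differentiableAt).deriv]
  linear_combination t * hode_deriv - x * hode.self_of_nhds

end Heun

theorem ishkhanyan_suominen_transform_general (x y z : ℂ) (r : ℝ)
    (u : ℂ → ℂ) (hu : DifferentiableOn ℂ u (ball (0 : ℂ) r))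
    (hode : ∀ t ∈ ball (0 : ℂ) r,
      t * (1 - t ^ 2) * deriv (deriv u) t
        + ((1 - x) * (1 - t ^ 2) - 2 * t * y) * deriv u t
        + 2 * (x * y - z ^ 2) * u t = 0) :
    DifferentiableOn ℂ (fun t => (1 - t) ^ y * (t * deriv u t - x * u t))
        (ball (0 : ℂ) (min r 1)) ∧
    (1 - (0 : ℂ)) ^ y * ((0 : ℂ) * deriv u 0 - x * u 0) = -x * u 0 ∧
    ∀ t ∈ ball (0 : ℂ) (min r 1),
      t * (1 - t ^ 2) * deriv (deriv (fun t => (1 - t) ^ y * (t * deriv u t - x * u t))) t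
        - (x * (1 - t ^ 2) - 2 * (y - 1) * t ^ 2)
          * deriv (fun t => (1 - t) ^ y * (t * deriv u t - x * u t)) t
        - ((2 * z ^ 2 - x * y) + y * (y + x - 1) * t)
          * ((1 - t) ^ y * (t * deriv u t - x * u t)) = 0 := by
  have hU : AnalyticOnNhd ℂ u (ball 0 r) := hu.analyticOnNhd isOpen_ball
  have hr : ∀ t ∈ ball (0 : ℂ) (min r 1), t ∈ ball (0 : ℂ) r :=
    fun t ht => ball_subset_ball (min_le_left r 1) ht
  have hslit : ∀ t ∈ ball (0 : ℂ) (min r 1), 1 - t ∈ slitPlane := fun t ht => by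
    simpa [sub_eq_add_neg] using mem_slitPlane_of_norm_lt_one (z := -t)
      (by simpa using ball_subset_ball (min_le_right r 1) ht)
  have hw : ∀ t ∈ ball (0 : ℂ) (min r 1),
      AnalyticAt ℂ (fun s => s * deriv u s - x * u s) t := fun t ht => by
    have := hU t (hr t ht)
    fun_prop
  refine ⟨fun t ht => (hasDerivAt_one_sub_cpow_mul y (hw t ht).differentiableAt
    (hslit t ht)).differentiableAt.differentiableWithinAt, by simp, fun t ht => ?_⟩
  refine (one_sub_cpow_mul_transform x y z (hw t ht) (hslit t ht)).trans
    (mul_eq_zero_of_right _ (mul_deriv_sub_ode_of_heun_ode x y z (hU t (hr t ht)) ?_))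
  exact Filter.mem_of_superset (isOpen_ball.mem_nhds (hr t ht)) hode

/-- The Ishkhanyan–Suominen transform: if `u` is holomorphic on `|t| < r` and satisfies
the Heun-type equation, then `v(t) = (1−t)^y (t u′(t) − x u(t))` is holomorphic on
`|t| < min r 1`, has `v(0) = −x u(0)`, and satisfies the transformed equation. -/
theorem ishkhanyan_suominen_transform (x y z : ℂ) (r : ℝ) (hr0 : 0 < r) (hr1 : r ≤ 1)
    (u : ℂ → ℂ) (hu : DifferentiableOn ℂ u (ball (0 : ℂ) r))
    (hode : ∀ t ∈ ball (0 : ℂ) r,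
      t * (1 - t ^ 2) * deriv (deriv u) t
        + ((1 - x) * (1 - t ^ 2) - 2 * t * y) * deriv u t
        + 2 * (x * y - z ^ 2) * u t = 0) :
    DifferentiableOn ℂ (fun t => (1 - t) ^ y * (t * deriv u t - x * u t))
        (ball (0 : ℂ) (min r 1)) ∧
    (1 - (0 : ℂ)) ^ y * ((0 : ℂ) * deriv u 0 - x * u 0) = -x * u 0 ∧
    ∀ t ∈ ball (0 : ℂ) (min r 1),
      t * (1 - t ^ 2) * deriv (deriv (fun t => (1 - t) ^ y * (t * deriv u t - x * u t))) t
        - (x * (1 - t ^ 2) - 2 * (y - 1) * t ^ 2)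
          * deriv (fun t => (1 - t) ^ y * (t * deriv u t - x * u t)) t
        - ((2 * z ^ 2 - x * y) + y * (y + x - 1) * t)
          * ((1 - t) ^ y * (t * deriv u t - x * u t)) = 0 :=
  ishkhanyan_suominen_transform_general x y z r u hu hode

end
end

section
/- Let x, y be complex numbers with Re x < 0 and 0 < Re y < 1. Then the series Σ_{m≥0} t^{2m} ( (−y/2)ₘ ((1−x−y)/2)ₘ / (m! ((1−x)/2)ₘ) ) ∫₀^{1} s^{2m−1−x} (1−ts)^{−y} ds converges uniformly for t in the closed interval [0, 1] (powers being principal values). -/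
open Complex Filter Metric Finset

attribute [local instance] Classical.propDecidable

noncomputable section

/-!
Weierstrass M-test. For `s, t ∈ [0, 1]` and `Re y ≥ 0` the integrand is bounded by
`|s ^ (-1 - x) (1 - s) ^ (-y)|`, whose integral is a convergent beta integral, so the `m`-th term
is bounded by a constant times the modulus of the coefficient `(a)ₘ (b)ₘ / (m! (c)ₘ)` with
`a = -y/2`, `b = (1-x-y)/2`, `c = (1-x)/2`. Expressing the shifted factorials through Euler's
`GammaSeq`, which tends to `Γ`, shows this coefficient is
`O(m ^ (Re (a+b-c) - 1)) = O(m ^ (-1 - Re y))`.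
-/

open Topology Asymptotics MeasureTheory

lemma ne_neg_natCast_of_neg_one_lt_re {s : ℂ} (h : -1 < s.re) (h0 : s.re ≠ 0) (n : ℕ) :
    s ≠ -n := by
  rintro rfl
  rcases n with _ | n
  · simp at h0
  · simp at h
    linarith [n.cast_nonneg (α := ℝ)]

lemma poch_ne_zero {s : ℂ} (hs : ∀ n : ℕ, s ≠ -n) (m : ℕ) : poch s m ≠ 0 :=
  prod_ne_zero_iff.mpr fun j _ => by simpa [add_eq_zero_iff_eq_neg] using hs j

lemma GammaSeq_eq_poch (s : ℂ) (m : ℕ) :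
    GammaSeq s m = (m : ℂ) ^ s * m.factorial / poch s (m + 1) := rfl

def hypCoeff (a b c : ℂ) (m : ℕ) : ℂ :=
  poch a m * poch b m / ((m.factorial : ℂ) * poch c m)

lemma hypCoeff_succ_eq {a b : ℂ} (c : ℂ) (ha : ∀ n : ℕ, a ≠ -n) (hb : ∀ n : ℕ, b ≠ -n)
    {m : ℕ} (hm : m ≠ 0) :
    hypCoeff a b c (m + 1) = (m : ℂ) ^ (a + b - c)
      * (GammaSeq c m / (GammaSeq a m * GammaSeq b m)) / (m + 1) := by
  have hm' : (m : ℂ) ≠ 0 := Nat.cast_ne_zero.mpr hm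
  have hpow (s : ℂ) : (m : ℂ) ^ s ≠ 0 := by simp [cpow_eq_zero_iff, hm']
  have hfac : (m.factorial : ℂ) ≠ 0 := Nat.cast_ne_zero.mpr m.factorial_ne_zero
  have ha' := poch_ne_zero ha (m + 1)
  have hb' := poch_ne_zero hb (m + 1)
  simp only [hypCoeff, GammaSeq_eq_poch, cpow_sub _ _ hm', cpow_add _ _ hm', Nat.factorial_succ]
  push_cast
  field_simp
  rw [show poch c (m + 1) * m ^ a * m ^ b * m ^ c = poch c (m + 1) * (m ^ a * m ^ b * m ^ c) by
    ring, div_mul_cancel_right₀ (by simp [hpow]), one_div]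

lemma norm_hypCoeff_succ_le {a b : ℂ} (c : ℂ) (ha : ∀ n : ℕ, a ≠ -n) (hb : ∀ n : ℕ, b ≠ -n)
    {m : ℕ} (hm : m ≠ 0) :
    ‖hypCoeff a b c (m + 1)‖
      ≤ ‖GammaSeq c m / (GammaSeq a m * GammaSeq b m)‖ * (m : ℝ) ^ ((a + b - c).re - 1) := by
  have hm0 : (0 : ℝ) < m := by positivity
  rw [hypCoeff_succ_eq c ha hb hm, norm_div, norm_mul, norm_natCast_cpow_of_pos (by omega),
    Real.rpow_sub_one hm0.ne', mul_comm, mul_div_assoc]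
  gcongr
  have : ((m + 1 : ℕ) : ℂ) = (m : ℂ) + 1 := by push_cast; rfl
  rw [← this, Complex.norm_natCast]
  push_cast
  linarith

theorem summable_norm_hypCoeff {a b c : ℂ} (ha : ∀ n : ℕ, a ≠ -n) (hb : ∀ n : ℕ, b ≠ -n)
    (habc : (a + b - c).re < 0) : Summable fun m => ‖hypCoeff a b c m‖ := by
  have hratio : Tendsto (fun m => GammaSeq c m / (GammaSeq a m * GammaSeq b m)) atTop
      (𝓝 (Gamma c / (Gamma a * Gamma b))) :=
    (GammaSeq_tendsto_Gamma c).div ((GammaSeq_tendsto_Gamma a).mul (GammaSeq_tendsto_Gamma b))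
      (mul_ne_zero (Gamma_ne_zero ha) (Gamma_ne_zero hb))
  have hO : (fun m : ℕ => ‖hypCoeff a b c (m + 1)‖)
      =O[atTop] fun m => ‖GammaSeq c m / (GammaSeq a m * GammaSeq b m)‖
        * (m : ℝ) ^ ((a + b - c).re - 1) := by
    refine IsBigO.of_bound' ?_
    filter_upwards [eventually_ne_atTop 0] with m hm
    rw [norm_norm]
    exact (norm_hypCoeff_succ_le c ha hb hm).trans (Real.le_norm_self _)
  have hratio_O := (hratio.norm.isBigO_one ℝ).mul (isBigO_refl
    (fun m : ℕ => (m : ℝ) ^ ((a + b - c).re - 1)) atTop)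
  rw [← summable_nat_add_iff 1]
  exact summable_of_isBigO_nat (Real.summable_nat_rpow.mpr (by linarith))
    ((hO.trans hratio_O).congr_right fun _ => one_mul _)

lemma norm_cpow_mul_one_sub_mul_cpow_le {x y : ℂ} (hy : 0 ≤ y.re) (m : ℕ) {t s : ℝ}
    (ht : t ∈ Set.Icc 0 1) (hs : s ∈ Set.Ioo 0 1) :
    ‖(s : ℂ) ^ (2 * (m : ℂ) - 1 - x) * (1 - (t : ℂ) * s) ^ (-y)‖
      ≤ ‖(s : ℂ) ^ (-1 - x) * (1 - (s : ℂ)) ^ (-y)‖ := by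
  obtain ⟨hs0, hs1⟩ := hs
  have hts : 0 < 1 - t * s := by nlinarith [ht.2]
  rw [norm_mul, norm_mul, norm_cpow_eq_rpow_re_of_pos hs0, norm_cpow_eq_rpow_re_of_pos hs0,
    show (1 : ℂ) - t * s = ((1 - t * s : ℝ) : ℂ) by push_cast; rfl,
    show (1 : ℂ) - s = ((1 - s : ℝ) : ℂ) by push_cast; rfl,
    norm_cpow_eq_rpow_re_of_pos hts, norm_cpow_eq_rpow_re_of_pos (by linarith)]
  gcongr ?_ * ?_
  · exact Real.rpow_le_rpow_of_exponent_ge hs0 hs1.le (by simp)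
  · exact Real.rpow_le_rpow_of_nonpos (by linarith) (by nlinarith [ht.2]) (by simpa)

lemma norm_integral_cpow_mul_one_sub_mul_cpow_le {x y : ℂ} (hx : x.re < 0) (hy0 : 0 ≤ y.re)
    (hy1 : y.re < 1) (m : ℕ) {t : ℝ} (ht : t ∈ Set.Icc 0 1) :
    ‖∫ s in (0 : ℝ)..1, (s : ℂ) ^ (2 * (m : ℂ) - 1 - x) * (1 - (t : ℂ) * s) ^ (-y)‖
      ≤ ∫ s in (0 : ℝ)..1, ‖(s : ℂ) ^ (-1 - x) * (1 - (s : ℂ)) ^ (-y)‖ := by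
  refine intervalIntegral.norm_integral_le_of_norm_le zero_le_one ?_ ?_
  · filter_upwards [volume.ae_ne 1] with s hs1 hs
    exact norm_cpow_mul_one_sub_mul_cpow_le hy0 m ht ⟨hs.1, lt_of_le_of_ne hs.2 hs1⟩
  · have := betaIntegral_convergent (u := -x) (v := 1 - y) (by simpa) (by simpa)
    simpa only [sub_sub_cancel_left, neg_sub_comm] using this.norm

/-- The series `Σ_m t^{2m} ((−y/2)ₘ((1−x−y)/2)ₘ/(m!((1−x)/2)ₘ)) ∫₀¹ s^{2m−1−x}(1−ts)^{−y} ds`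
converges uniformly for `t ∈ [0,1]`, when `Re x < 0` and `0 < Re y < 1`. -/
theorem series_unif_conv_on_Icc (x y : ℂ) (hrex : x.re < 0)
    (hrey0 : 0 < y.re) (hrey1 : y.re < 1) :
    TendstoUniformlyOn
      (fun (N : ℕ) (t : ℝ) => ∑ m ∈ Finset.range N,
        (t : ℂ) ^ (2 * m)
          * (poch (-y / 2) m * poch ((1 - x - y) / 2) m
              / ((m.factorial : ℂ) * poch ((1 - x) / 2) m))
          * ∫ s in (0 : ℝ)..1,
              ((s : ℂ) ^ (2 * (m : ℂ) - 1 - x) * (1 - (t : ℂ) * (s : ℂ)) ^ (-y)))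
      (fun t : ℝ => ∑' m : ℕ,
        (t : ℂ) ^ (2 * m)
          * (poch (-y / 2) m * poch ((1 - x - y) / 2) m
              / ((m.factorial : ℂ) * poch ((1 - x) / 2) m))
          * ∫ s in (0 : ℝ)..1,
              ((s : ℂ) ^ (2 * (m : ℂ) - 1 - x) * (1 - (t : ℂ) * (s : ℂ)) ^ (-y)))
      atTop (Set.Icc (0 : ℝ) 1) := by
  have ha : ∀ n : ℕ, -y / 2 ≠ -n :=
    ne_neg_natCast_of_neg_one_lt_re (by simp; linarith) (by simp; linarith)
  have hb : ∀ n : ℕ, (1 - x - y) / 2 ≠ -n :=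
    ne_neg_natCast_of_neg_one_lt_re (by simp; linarith) (by simp; linarith)
  have hcoeff := summable_norm_hypCoeff ha hb (c := (1 - x) / 2) (by simp; linarith)
  refine tendstoUniformlyOn_tsum_nat (hcoeff.mul_right
    (∫ s in (0 : ℝ)..1, ‖(s : ℂ) ^ (-1 - x) * (1 - (s : ℂ)) ^ (-y)‖)) fun m t ht => ?_
  have ht_pow : ‖(t : ℂ) ^ (2 * m)‖ ≤ 1 := by
    rw [norm_pow, norm_real, Real.norm_of_nonneg ht.1]
    exact pow_le_one₀ ht.1 ht.2
  rw [norm_mul, norm_mul]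
  exact mul_le_mul (mul_le_of_le_one_left (norm_nonneg _) ht_pow)
    (norm_integral_cpow_mul_one_sub_mul_cpow_le hrex hrey0.le hrey1 m ht)
    (norm_nonneg _) (norm_nonneg _)

end
end
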